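/- arXiv:1303.3645 — 3 statements merged into one kernel-verified Lean document; each statement's English description precedes it below -/
import Mathlib

section
/- For every sentence φ of classical first-order logic (over a finite signature of function symbols and predicate symbols), one can construct a corresponding LTL^FO sentence ψ such that φ has a finite model (in the classical first-order sense) if and only if ψ is satisfiable, i.e., there exists a first-order temporal structure (𝔄̄, w) with (𝔄̄, w) ⊨ ψ. Concretely, ψ is obtained from φ by introducing a fresh unary uninterpreted predicate d, replacing every ∀x.θ by ∀x:d.θ and every ∃x.θ by ∃x:d.θ, conjoining d(c) for every constant symbol c, conjoining ∀x₁:d.…∀xₙ:d. d(f(x₁,…,xₙ)) for every n-ary function symbol f, conjoining ∀(x₁,…,xₙ):p. d(x₁)∧…∧d(xₙ) for every n-ary predicate symbol p, and conjoining ∃x:d. d(x). -/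
/-!
LTL^FO: a first-order temporal logic.  One-sorted signatures with function
symbols, uninterpreted predicate symbols (U-operators, interpreted via the
trace) and interpreted predicate symbols (I-operators), terms, formulae,
first-order temporal structures, and the satisfaction relation in which
quantifiers range over the actions of the current event.
-/

namespace LTLFO

/-- A (one-sorted) signature: function symbols `Func`, uninterpreted predicate
symbols `UPred` and interpreted predicate symbols `IPred`, with their arities. -/
structure Sig : Type 1 where
  Func : Type
  arF : Func → ℕ
  UPred : Type
  arU : UPred → ℕ
  IPred : Type
  arI : IPred → ℕ

/-- Terms over a signature, built from variables (named by naturals) and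
function symbols. -/
inductive Tm (s : Sig) : Type where
  | var (x : ℕ) : Tm s
  | func (f : s.Func) (args : Fin (s.arF f) → Tm s) : Tm s

/-- LTL^FO formulae:
`φ ::= ⊤ | p(t⃗) | r(t⃗) | ¬φ | φ∧φ | Xφ | φUφ | ∀(x₁,…,xₙ):p. φ`. -/
inductive FOForm (s : Sig) : Type where
  | tt : FOForm s
  | uatom (p : s.UPred) (ts : Fin (s.arU p) → Tm s) : FOForm s
  | iatom (r : s.IPred) (ts : Fin (s.arI r) → Tm s) : FOForm s
  | neg (φ : FOForm s) : FOForm s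
  | and (φ ψ : FOForm s) : FOForm s
  | next (φ : FOForm s) : FOForm s
  | until_ (φ ψ : FOForm s) : FOForm s
  | forall_ (p : s.UPred) (xs : Fin (s.arU p) → ℕ) (φ : FOForm s) : FOForm s

/-- An action `(p, d⃗)`: a U-operator together with a matching tuple of domain values. -/
abbrev Action (s : Sig) (D : Type) : Type := Σ p : s.UPred, (Fin (s.arU p) → D)

variable {s : Sig} {D : Type}

/-- Evaluation of a term in a domain `D`, given an interpretation of the function
symbols and a valuation of the variables. -/
def Tm.eval (fI : (f : s.Func) → (Fin (s.arF f) → D) → D) (v : ℕ → D) : Tm s → D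
  | .var x => v x
  | .func f a => fI f (fun k => Tm.eval fI v (a k))

/-- Update a valuation `v` by binding the variables `xs k` to the values `d k`
(i.e. `v ∪ {x₁ ↦ d₁, …, xₙ ↦ dₙ}`). -/
def updVec {n : ℕ} (v : ℕ → D) (xs : Fin n → ℕ) (d : Fin n → D) : ℕ → D :=
  fun x =>
    match (List.finRange n).find? (fun k => xs k == x) with
    | some k => d k
    | none => v x

/-- An (infinite) first-order temporal structure `(𝔄̄, w)` over a fixed domain `D`:
a rigid interpretation of the function symbols, a per-position interpretation of
the I-operators, and a trace of events (finite sets of actions). -/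
structure TStruct (s : Sig) (D : Type) : Type where
  funcI : (f : s.Func) → (Fin (s.arF f) → D) → D
  predI : ℕ → (r : s.IPred) → (Fin (s.arI r) → D) → Prop
  trace : ℕ → Set (Action s D)
  finEv : ∀ i, (trace i).Finite

/-- The satisfaction relation `(𝔄̄, w, v, i) ⊨ φ` (infinite-trace semantics).
Quantifiers range over the actions of the current event. -/
def Sat (M : TStruct s D) : FOForm s → (ℕ → D) → ℕ → Prop
  | .tt, _, _ => True
  | .uatom p ts, v, i => (⟨p, fun k => Tm.eval M.funcI v (ts k)⟩ : Action s D) ∈ M.trace i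
  | .iatom r ts, v, i => M.predI i r (fun k => Tm.eval M.funcI v (ts k))
  | .neg φ, v, i => ¬ Sat M φ v i
  | .and φ ψ, v, i => Sat M φ v i ∧ Sat M ψ v i
  | .next φ, v, i => Sat M φ v (i + 1)
  | .until_ φ ψ, v, i => ∃ k, i ≤ k ∧ Sat M ψ v k ∧ ∀ j, i ≤ j → j < k → Sat M φ v j
  | .forall_ p xs φ, v, i =>
      ∀ d : Fin (s.arU p) → D, (⟨p, d⟩ : Action s D) ∈ M.trace i → Sat M φ (updVec v xs d) i

/-- The variables occurring in a term. -/
def Tm.vars : Tm s → Set ℕ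
  | .var x => {x}
  | .func _ a => ⋃ k, Tm.vars (a k)

/-- The free variables of a formula. -/
def FOForm.fv : FOForm s → Set ℕ
  | .tt => ∅
  | .uatom _ ts => ⋃ k, Tm.vars (ts k)
  | .iatom _ ts => ⋃ k, Tm.vars (ts k)
  | .neg φ => FOForm.fv φ
  | .and φ ψ => FOForm.fv φ ∪ FOForm.fv ψ
  | .next φ => FOForm.fv φ
  | .until_ φ ψ => FOForm.fv φ ∪ FOForm.fv ψ
  | .forall_ _ xs φ => FOForm.fv φ \ Set.range xs

/-- A sentence is a formula without free variables. -/
def FOForm.Closed (φ : FOForm s) : Prop := FOForm.fv φ = ∅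

/-- An LTL^FO sentence is satisfiable iff some first-order temporal structure
(over some nonempty domain) satisfies it at position 0. -/
def FOSatisfiable (s : Sig) (φ : FOForm s) : Prop :=
  ∃ (D : Type) (_ : Nonempty D) (M : TStruct s D) (v : ℕ → D), Sat M φ v 0

end LTLFO

namespace LTLFO

/-- A classical first-order signature: function symbols and predicate symbols. -/
structure CSig : Type 1 where
  Func : Type
  arF : Func → ℕ
  Pred : Type
  arP : Pred → ℕ

/-- The LTL^FO signature corresponding to a classical signature: the predicate
symbols become U-operators, together with one fresh unary U-operator `d`
(represented by `Sum.inr ()`); there are no I-operators. -/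
def CSig.toSig (c : CSig) : Sig where
  Func := c.Func
  arF := c.arF
  UPred := c.Pred ⊕ Unit
  arU := fun p => match p with
    | .inl p => c.arP p
    | .inr _ => 1
  IPred := Empty
  arI := fun r => r.elim

/-- Classical first-order formulae over `c` (with `∃x.θ := ¬∀x.¬θ` derived). -/
inductive CForm (c : CSig) : Type where
  | atom (p : c.Pred) (ts : Fin (c.arP p) → Tm c.toSig) : CForm c
  | neg (φ : CForm c) : CForm c
  | and (φ ψ : CForm c) : CForm c
  | all (x : ℕ) (φ : CForm c) : CForm c

/-- Classical Tarskian satisfaction. -/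
def CSat {c : CSig} {D : Type}
    (fI : (f : c.Func) → (Fin (c.arF f) → D) → D)
    (pI : (p : c.Pred) → (Fin (c.arP p) → D) → Prop) :
    CForm c → (ℕ → D) → Prop
  | .atom p ts, v => pI p (fun k => Tm.eval fI v (ts k))
  | .neg φ, v => ¬ CSat fI pI φ v
  | .and φ ψ, v => CSat fI pI φ v ∧ CSat fI pI ψ v
  | .all x φ, v => ∀ d : D, CSat fI pI φ (Function.update v x d)

/-- Free variables of a classical formula. -/
def CForm.fv {c : CSig} : CForm c → Set ℕ
  | .atom _ ts => ⋃ k, Tm.vars (ts k)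
  | .neg φ => CForm.fv φ
  | .and φ ψ => CForm.fv φ ∪ CForm.fv ψ
  | .all x φ => CForm.fv φ \ {x}

/-- A classical sentence. -/
def CForm.Closed {c : CSig} (φ : CForm c) : Prop := CForm.fv φ = ∅

/-- `φ` has a finite model (in the classical first-order sense). -/
def HasFiniteModel {c : CSig} (φ : CForm c) : Prop :=
  ∃ (D : Type) (_ : Fintype D) (_ : Nonempty D)
    (fI : (f : c.Func) → (Fin (c.arF f) → D) → D)
    (pI : (p : c.Pred) → (Fin (c.arP p) → D) → Prop),
    ∀ v : ℕ → D, CSat fI pI φ v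

/-- The atom `d(t)` for the fresh unary U-operator `d`. -/
def dAtom {c : CSig} (t : Tm c.toSig) : FOForm c.toSig :=
  .uatom (Sum.inr ()) (fun _ => t)

/-- The main translation: replace every `∀x.θ` by `∀x:d.θ` (and hence every
`∃x.θ = ¬∀x.¬θ` by `∃x:d.θ`); predicate symbols become U-operators. -/
def trMain {c : CSig} : CForm c → FOForm c.toSig
  | .atom p ts => .uatom (Sum.inl p) ts
  | .neg φ => .neg (trMain φ)
  | .and φ ψ => .and (trMain φ) (trMain ψ)
  | .all x φ => .forall_ (Sum.inr ()) (fun _ => x) (trMain φ)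

/-- Finite conjunction (`tt` for the empty one). -/
def bigAnd {s : Sig} : List (FOForm s) → FOForm s
  | [] => .tt
  | [φ] => φ
  | φ :: rest => .and φ (bigAnd rest)

/-- `∀x₀:d. … ∀x_{n-1}:d. φ`. -/
def wrapForalls {c : CSig} : ℕ → FOForm c.toSig → FOForm c.toSig
  | 0, φ => φ
  | n + 1, φ => wrapForalls n (.forall_ (Sum.inr ()) (fun _ => (n : ℕ)) φ)

/-- For an `n`-ary function symbol `f`, the conjunct
`∀x₁:d.…∀xₙ:d. d(f(x₁,…,xₙ))`  (for `n = 0`, i.e. a constant `c`, this is `d(c)`). -/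
def funcAx {c : CSig} (f : c.Func) : FOForm c.toSig :=
  wrapForalls (c.arF f) (dAtom (Tm.func f (fun k => Tm.var (k : ℕ))))

/-- For an `n`-ary predicate symbol `p`, the conjunct
`∀(x₁,…,xₙ):p. d(x₁) ∧ … ∧ d(xₙ)`. -/
def predAx {c : CSig} (p : c.Pred) : FOForm c.toSig :=
  .forall_ (Sum.inl p) (fun k => (k : ℕ))
    (bigAnd ((List.finRange (c.arP p)).map (fun k => dAtom (Tm.var (k : ℕ)))))

/-- The conjunct `∃x:d. d(x)` (the domain is not empty). -/
def nonemptyAx {c : CSig} : FOForm c.toSig :=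
  .neg (.forall_ (Sum.inr ()) (fun _ => 0) (.neg (dAtom (Tm.var 0))))

/-- The full translation `ψ` of the classical sentence `φ`. -/
noncomputable def translate {c : CSig} [Fintype c.Func] [Fintype c.Pred]
    (φ : CForm c) : FOForm c.toSig :=
  bigAnd (trMain φ ::
    ((Finset.univ : Finset c.Func).toList.map funcAx ++
      (Finset.univ : Finset c.Pred).toList.map predAx ++ [nonemptyAx]))

/-!
A finite model of `φ` is turned into a temporal structure whose every event consists of the
actions `d(a)` for all elements `a` and `p(a⃗)` for the true atoms; it is finite because the
model is. Conversely, in a model of `ψ` the `d`-elements of the first event form a finite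
(events are finite), nonempty set closed under the functions, and reading the predicates off the
same event makes it a classical structure. In both directions the relativised quantifiers
`∀x:d` range exactly over the `d`-elements, so `trMain φ` holds iff `φ` does.
-/

section Semantics

variable {s : Sig} {D : Type}

theorem updVec_fin_one (v : ℕ → D) (xs : Fin 1 → ℕ) (d : Fin 1 → D) :
    updVec v xs d = Function.update v (xs 0) (d 0) := by
  funext y
  rcases eq_or_ne (xs 0) y with rfl | hne
  · simp [updVec, List.finRange_succ]
  · simp [updVec, List.finRange_succ, hne, Function.update_of_ne (Ne.symm hne)]

theorem sat_bigAnd (M : TStruct s D) (l : List (FOForm s)) (v : ℕ → D) (i : ℕ) :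
    Sat M (bigAnd l) v i ↔ ∀ ψ ∈ l, Sat M ψ v i := by
  induction l with
  | nil => simp [bigAnd, Sat]
  | cons φ rest ih =>
    cases rest with
    | nil => simp [bigAnd]
    | cons ψ rest => simp [bigAnd, Sat, ih]

theorem Tm.eval_congr (fI : (f : s.Func) → (Fin (s.arF f) → D) → D) {v w : ℕ → D} (t : Tm s)
    (h : ∀ x ∈ t.vars, v x = w x) : t.eval fI v = t.eval fI w := by
  induction t with
  | var x => exact h x rfl
  | func f a ih =>
    refine congrArg (fI f) (funext fun k => ih k fun x hx => h x ?_)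
    exact Set.mem_iUnion.mpr ⟨k, hx⟩

theorem Tm.eval_comp {E : Type} (ι : E → D) (fE : (f : s.Func) → (Fin (s.arF f) → E) → E)
    (fD : (f : s.Func) → (Fin (s.arF f) → D) → D) (hι : ∀ f a, ι (fE f a) = fD f (ι ∘ a))
    (v : ℕ → E) (t : Tm s) : ι (t.eval fE v) = t.eval fD (ι ∘ v) := by
  induction t with
  | var x => rfl
  | func f a ih => exact (hι f _).trans (congrArg (fD f) (funext ih))

end Semantics

section Translation

variable {c : CSig} {D : Type}

def TStruct.domAt (M : TStruct c.toSig D) (i : ℕ) : Set D :=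
  {x | (⟨Sum.inr (), fun _ => x⟩ : Action c.toSig D) ∈ M.trace i}

theorem TStruct.domAt_finite (M : TStruct c.toSig D) (i : ℕ) : (M.domAt i).Finite :=
  (M.finEv i).preimage (sigma_mk_injective.comp (Function.const_injective (α := Fin 1))).injOn

theorem sat_dAtom (M : TStruct c.toSig D) (t : Tm c.toSig) (v : ℕ → D) (i : ℕ) :
    Sat M (dAtom t) v i ↔ t.eval M.funcI v ∈ M.domAt i :=
  Iff.rfl

theorem sat_forall_d (M : TStruct c.toSig D) (x : ℕ) (ψ : FOForm c.toSig) (v : ℕ → D) (i : ℕ) :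
    Sat M (.forall_ (Sum.inr ()) (fun _ => x) ψ) v i ↔
      ∀ e ∈ M.domAt i, Sat M ψ (Function.update v x e) i := by
  show (∀ d : Fin 1 → D, (⟨Sum.inr (), d⟩ : Action c.toSig D) ∈ M.trace i →
    Sat M ψ (updVec v (fun _ => x) d) i) ↔ _
  simp only [updVec_fin_one]
  constructor
  · exact fun h e he => h (fun _ => e) he
  · intro h d hd
    obtain ⟨e, rfl⟩ : ∃ e, (fun _ => e) = d :=
      ⟨d 0, funext fun k => congrArg d (Subsingleton.elim 0 k)⟩
    exact h e hd

def extendVal {n : ℕ} (v : ℕ → D) (a : Fin n → D) : ℕ → D :=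
  fun x => if h : x < n then a ⟨x, h⟩ else v x

theorem extendVal_zero (v : ℕ → D) (a : Fin 0 → D) : extendVal v a = v :=
  funext fun x => dif_neg (Nat.not_lt_zero x)

theorem extendVal_fin {n : ℕ} (v : ℕ → D) (a : Fin n → D) (k : Fin n) :
    extendVal v a k = a k :=
  dif_pos k.is_lt

theorem update_extendVal_init {n : ℕ} (v : ℕ → D) (a : Fin (n + 1) → D) :
    Function.update (extendVal v (Fin.init a)) n (a (Fin.last n)) = extendVal v a := by
  funext x
  rcases lt_trichotomy x n with hlt | rfl | hgt
  · simp [extendVal, Function.update_of_ne hlt.ne, hlt, Nat.lt_succ_of_lt hlt, Fin.init]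
  · simp [extendVal, Fin.last]
  · simp [extendVal, Function.update_of_ne hgt.ne', hgt.not_gt, (Nat.succ_le_of_lt hgt).not_gt]

theorem sat_wrapForalls (M : TStruct c.toSig D) (n : ℕ) (ψ : FOForm c.toSig) (v : ℕ → D)
    (i : ℕ) : Sat M (wrapForalls n ψ) v i ↔
      ∀ a : Fin n → D, (∀ k, a k ∈ M.domAt i) → Sat M ψ (extendVal v a) i := by
  induction n generalizing ψ with
  | zero => simp [wrapForalls, extendVal_zero]
  | succ n ih =>
    simp only [wrapForalls, ih, sat_forall_d]
    constructor
    · intro h a ha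
      rw [← update_extendVal_init]
      exact h (Fin.init a) (fun k => ha _) _ (ha _)
    · intro h a ha e he
      have := h (Fin.snoc a e) (Fin.lastCases (by simpa using he) (by simpa using ha))
      rwa [← update_extendVal_init, Fin.init_snoc, Fin.snoc_last] at this

theorem sat_funcAx (M : TStruct c.toSig D) (f : c.Func) (v : ℕ → D) (i : ℕ) :
    Sat M (funcAx f) v i ↔
      ∀ a : Fin (c.arF f) → D, (∀ k, a k ∈ M.domAt i) → M.funcI f a ∈ M.domAt i := by
  simp only [funcAx, sat_wrapForalls, sat_dAtom, Tm.eval]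
  exact forall₂_congr fun a _ => by erw [funext (extendVal_fin v a)]

theorem sat_nonemptyAx (M : TStruct c.toSig D) (v : ℕ → D) (i : ℕ) :
    Sat M nonemptyAx v i ↔ (M.domAt i).Nonempty := by
  rw [nonemptyAx, Sat, sat_forall_d]
  simp [Sat, sat_dAtom, Tm.eval, Set.Nonempty]

theorem sat_translate [Fintype c.Func] [Fintype c.Pred] (M : TStruct c.toSig D) (φ : CForm c)
    (v : ℕ → D) (i : ℕ) : Sat M (translate φ) v i ↔
      Sat M (trMain φ) v i ∧ (∀ f, Sat M (funcAx f) v i) ∧ (∀ p, Sat M (predAx p) v i) ∧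
        Sat M nonemptyAx v i := by
  simp [translate, sat_bigAnd, or_imp, forall_and]

theorem sat_trMain_congr (M : TStruct c.toSig D) (θ : CForm c) {v w : ℕ → D} (i : ℕ)
    (h : ∀ x ∈ θ.fv, v x = w x) : Sat M (trMain θ) v i ↔ Sat M (trMain θ) w i := by
  induction θ generalizing v w with
  | atom p ts =>
    simp only [trMain, Sat]
    congr! 3 with k
    exact Tm.eval_congr M.funcI (ts k) fun x hx => h x (Set.mem_iUnion.mpr ⟨k, hx⟩)
  | neg θ ih => exact not_congr (ih h)
  | and θ ψ ih₁ ih₂ =>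
    exact and_congr (ih₁ fun x hx => h x (Or.inl hx)) (ih₂ fun x hx => h x (Or.inr hx))
  | all x θ ih =>
    simp only [trMain, sat_forall_d]
    refine forall₂_congr fun e _ => ih fun y hy => ?_
    rcases eq_or_ne y x with rfl | hne
    · simp
    · simpa [Function.update_of_ne hne] using h y ⟨hy, hne⟩

theorem sat_trMain_iff_cSat {E : Type} (M : TStruct c.toSig D) (i : ℕ) (ι : E → D)
    (hι : Set.range ι = M.domAt i) (fE : (f : c.Func) → (Fin (c.arF f) → E) → E)
    (hf : ∀ f a, ι (fE f a) = M.funcI f (ι ∘ a))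
    (pE : (p : c.Pred) → (Fin (c.arP p) → E) → Prop)
    (hp : ∀ p a, pE p a ↔ (⟨Sum.inl p, ι ∘ a⟩ : Action c.toSig D) ∈ M.trace i)
    (θ : CForm c) (v : ℕ → E) : Sat M (trMain θ) (ι ∘ v) i ↔ CSat fE pE θ v := by
  induction θ generalizing v with
  | atom p ts =>
    simp only [trMain, Sat, CSat, hp]
    congr! 3 with k
    exact (Tm.eval_comp (s := c.toSig) ι fE M.funcI hf v (ts k)).symm
  | neg θ ih => exact not_congr (ih v)
  | and θ ψ ih₁ ih₂ => exact and_congr (ih₁ v) (ih₂ v)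
  | all x θ ih =>
    simp only [trMain, CSat, sat_forall_d, ← hι, Set.forall_mem_range, ← Function.comp_update, ih]

def toTStruct [Finite c.Pred] [Finite D] (fI : (f : c.Func) → (Fin (c.arF f) → D) → D)
    (pI : (p : c.Pred) → (Fin (c.arP p) → D) → Prop) : TStruct c.toSig D where
  funcI := fI
  predI _ r := r.elim
  trace _ := {a | match a with
    | ⟨.inl p, d⟩ => pI p d
    | ⟨.inr _, _⟩ => True}
  finEv _ :=
    have : Finite c.toSig.UPred := inferInstanceAs (Finite (c.Pred ⊕ Unit))
    Set.toFinite _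

section toTStruct

variable [Finite c.Pred] [Finite D] (fI : (f : c.Func) → (Fin (c.arF f) → D) → D)
  (pI : (p : c.Pred) → (Fin (c.arP p) → D) → Prop)

theorem domAt_toTStruct (i : ℕ) : (toTStruct fI pI).domAt i = Set.univ :=
  Set.eq_univ_of_forall fun _ => trivial

theorem sat_translate_toTStruct [Fintype c.Func] [Fintype c.Pred] [Nonempty D] {φ : CForm c}
    (hmodel : ∀ v, CSat fI pI φ v) (v : ℕ → D) (i : ℕ) :
    Sat (toTStruct fI pI) (translate φ) v i := by
  refine (sat_translate _ φ v i).mpr ⟨?_, fun f => ?_, fun p => ?_, ?_⟩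
  · exact (sat_trMain_iff_cSat _ i id (by simp [domAt_toTStruct]) fI (fun _ _ => rfl) pI
      (fun _ _ => Iff.rfl) φ v).mpr (hmodel v)
  · simp [sat_funcAx, domAt_toTStruct]
  · simp [predAx, Sat, sat_bigAnd, sat_dAtom, domAt_toTStruct]
  · simp [sat_nonemptyAx, domAt_toTStruct]

end toTStruct

theorem hasFiniteModel_of_sat_translate [Fintype c.Func] [Fintype c.Pred] {φ : CForm c}
    (hφ : φ.Closed) (M : TStruct c.toSig D) (v : ℕ → D) (i : ℕ)
    (h : Sat M (translate φ) v i) : HasFiniteModel φ := by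
  obtain ⟨hφM, hfunc, -, hne⟩ := (sat_translate M φ v i).mp h
  have hclosed (f : c.Func) (a : Fin (c.arF f) → M.domAt i) :
      M.funcI f (Subtype.val ∘ a) ∈ M.domAt i :=
    (sat_funcAx M f v i).mp (hfunc f) _ fun k => (a k).2
  refine ⟨M.domAt i, (M.domAt_finite i).fintype, ((sat_nonemptyAx M v i).mp hne).to_subtype,
    fun f a => ⟨_, hclosed f a⟩,
    fun p a => (⟨Sum.inl p, Subtype.val ∘ a⟩ : Action c.toSig D) ∈ M.trace i, fun w => ?_⟩
  refine (sat_trMain_iff_cSat M i Subtype.val Subtype.range_coe _ (fun _ _ => rfl) _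
    (fun _ _ => Iff.rfl) φ w).mp ((sat_trMain_congr M φ i fun x hx => ?_).mp hφM)
  rw [hφ] at hx
  exact hx.elim

end Translation

/-- For every classical first-order sentence `φ` over a finite
signature, the constructed LTL^FO sentence `ψ = translate φ` satisfies:
`φ` has a finite model iff `ψ` is satisfiable. -/
theorem hasFiniteModel_iff_translate_satisfiable {c : CSig}
    [Fintype c.Func] [Fintype c.Pred]
    (φ : CForm c) (hφ : CForm.Closed φ) :
    HasFiniteModel φ ↔ FOSatisfiable c.toSig (translate φ) := by
  constructor
  · rintro ⟨D, _, hne, fI, pI, h⟩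
    exact ⟨D, hne, toTStruct fI pI, fun _ => hne.some, sat_translate_toTStruct fI pI h _ 0⟩
  · rintro ⟨D, -, M, v, h⟩
    exact hasFiniteModel_of_sat_translate hφ M v 0 h

end LTLFO
end

section
/- Correctness of the PCP reduction: let K = (x₁,y₁),…,(x_k,y_k) be an instance of Post's Correspondence Problem over Σ = {0,1} with xᵢ, yᵢ ∈ Σ⁺. Let 𝔄 = (Σ⁺, I) be the first-order structure with domain the nonempty binary strings, with a unary interpreted predicate pcp where pcp^I(u) holds iff there exist n ≥ 1 and indices i₁,…,iₙ ∈ {1,…,k} with u = x_{i₁}⋯x_{iₙ} = y_{i₁}⋯y_{iₙ}, and let z be a unary uninterpreted predicate symbol. Let φ_K = ∃γ:z. pcp(γ). Then L(φ_K)_𝔄 ≠ ∅ if and only if K has a solution, i.e., iff there exist n ≥ 1 and indices i₁,…,iₙ with x_{i₁}⋯x_{iₙ} = y_{i₁}⋯y_{iₙ}. -/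
namespace LTLFO

/-- The signature of the PCP reduction: one unary uninterpreted predicate symbol `z`,
one unary interpreted predicate symbol `pcp`, and no function symbols. -/
def sPCP : Sig where
  Func := Empty
  arF := fun f => f.elim
  UPred := Unit
  arU := fun _ => 1
  IPred := Unit
  arI := fun _ => 1

/-- The domain `Σ⁺` of all nonempty binary strings. -/
def DomPCP : Type := {u : List Bool // u ≠ []}

/-- The PCP instance `K = (x₁,y₁),…,(x_k,y_k)` has a solution: there are `n ≥ 1` and
indices `i₁,…,iₙ` with `x_{i₁}⋯x_{iₙ} = y_{i₁}⋯y_{iₙ}`. -/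
def HasSolution {k : ℕ} (K : Fin k → List Bool × List Bool) : Prop :=
  ∃ is : List (Fin k), is ≠ [] ∧
    (is.map (fun i => (K i).1)).flatten = (is.map (fun i => (K i).2)).flatten

/-- The interpretation of `pcp`: `pcp(u)` holds iff `u` is a common concatenation
`x_{i₁}⋯x_{iₙ} = y_{i₁}⋯y_{iₙ}` for some nonempty sequence of indices. -/
def pcpInterp {k : ℕ} (K : Fin k → List Bool × List Bool) (u : DomPCP) : Prop :=
  ∃ is : List (Fin k), is ≠ [] ∧
    u.1 = (is.map (fun i => (K i).1)).flatten ∧ u.1 = (is.map (fun i => (K i).2)).flatten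

/-- The sentence `φ_K = ∃γ:z. pcp(γ)`, i.e. `¬∀γ:z.¬pcp(γ)`. -/
def phiPCP : FOForm sPCP :=
  .neg (.forall_ () (fun _ => 0) (.neg (.iatom () (fun _ => Tm.var 0))))

/-!
`φ_K` holds at a position exactly when some action `z(u)` of the current event satisfies
`pcp`, so `L(φ_K)_𝔄` is nonempty iff `pcp^I` is. A PCP solution gives an element of
`pcp^I`, its common concatenation, which is a nonempty string because every `xᵢ` is
nonempty; conversely, a trace whose every event is the single action `z(u)` realises any
`u ∈ pcp^I`.
-/

theorem sat_neg_forall_neg {s : Sig} {D : Type} {M : TStruct s D} {p : s.UPred}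
    {xs : Fin (s.arU p) → ℕ} {φ : FOForm s} {v : ℕ → D} {i : ℕ} :
    Sat M (.neg (.forall_ p xs (.neg φ))) v i ↔
      ∃ d, (⟨p, d⟩ : Action s D) ∈ M.trace i ∧ Sat M φ (updVec v xs d) i := by
  simp [Sat]

theorem sat_phiPCP_iff {D : Type} {M : TStruct sPCP D} {v : ℕ → D} {i : ℕ} :
    Sat M phiPCP v i ↔
      ∃ d : Fin 1 → D, (⟨(), d⟩ : Action sPCP D) ∈ M.trace i ∧ M.predI i () (fun _ => d 0) :=
  -- the bound variable `0` is read back through `updVec`, which reduces to `d 0`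
  sat_neg_forall_neg

theorem exists_pcpInterp_iff_hasSolution {k : ℕ} (K : Fin k → List Bool × List Bool)
    (hK : ∀ i, (K i).1 ≠ []) : (∃ u, pcpInterp K u) ↔ HasSolution K := by
  constructor
  · rintro ⟨u, is, his, hx, hy⟩
    exact ⟨is, his, hx.symm.trans hy⟩
  · rintro ⟨is, his, hsol⟩
    obtain ⟨i, hi⟩ := List.exists_mem_of_ne_nil is his
    have hx : (is.map fun i => (K i).1).flatten ≠ [] :=
      List.flatten_ne_nil_iff.2 ⟨_, List.mem_map_of_mem hi, hK i⟩
    exact ⟨⟨_, hx⟩, is, his, rfl, hsol⟩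

def pcpStruct {k : ℕ} (K : Fin k → List Bool × List Bool) (u : DomPCP) :
    TStruct sPCP DomPCP where
  funcI f := f.elim
  predI _ _ d := pcpInterp K (d ⟨0, Nat.one_pos⟩)
  trace _ := {⟨(), fun _ => u⟩}
  finEv _ := Set.finite_singleton _

/-- Correctness of the PCP reduction: `L(φ_K)_𝔄 ≠ ∅` (there is a
first-order temporal structure over `𝔄`, i.e. with `pcp` interpreted as above at every
position, satisfying `φ_K`) iff the PCP instance `K` has a solution. -/
theorem pcp_reduction_correct {k : ℕ} (K : Fin k → List Bool × List Bool)
    (hK : ∀ i, (K i).1 ≠ [] ∧ (K i).2 ≠ []) :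
    (∃ (M : TStruct sPCP DomPCP) (v : ℕ → DomPCP),
        (∀ (i : ℕ) (r : sPCP.IPred) (d : Fin (sPCP.arI r) → DomPCP),
          M.predI i r d ↔ pcpInterp K (d ⟨0, Nat.one_pos⟩)) ∧
        Sat M phiPCP v 0) ↔
      HasSolution K := by
  rw [← exists_pcpInterp_iff_hasSolution K fun i => (hK i).1]
  constructor
  · rintro ⟨M, v, hI, hsat⟩
    obtain ⟨d, -, hd⟩ := sat_phiPCP_iff.1 hsat
    exact ⟨_, (hI _ _ _).1 hd⟩
  · rintro ⟨u, hu⟩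
    exact ⟨pcpStruct K u, fun _ => u, fun _ _ _ => Iff.rfl, sat_phiPCP_iff.2 ⟨_, rfl, hu⟩⟩

end LTLFO
end

section
/- Correctness of runs of spawning automata (SA): let φ ∈ LTL^FO (not necessarily a sentence) and v a valuation, and let A_{φ,v} be the spawning automaton constructed from φ and v. For each accepting run ρ of A_{φ,v} over an input first-order temporal structure (𝔄̄, w), each formula ψ ∈ cl(φ), and each i ≥ 0: ψ ∈ ρ(i) if and only if (𝔄̄, w, v, i) ⊨ ψ. -/
namespace LTLFO

variable {s : Sig} {D : Type}

/-- The quantifier depth of a formula (the level of its spawning automaton). -/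
def depthFO : FOForm s → ℕ
  | .tt => 0
  | .uatom _ _ => 0
  | .iatom _ _ => 0
  | .neg φ => depthFO φ
  | .and φ ψ => max (depthFO φ) (depthFO ψ)
  | .next φ => depthFO φ
  | .until_ φ ψ => max (depthFO φ) (depthFO ψ)
  | .forall_ _ _ φ => depthFO φ + 1

/-- The restricted subformula function `sf|∀`, treating quantified subformulae as
atomic. -/
def sfA : FOForm s → Set (FOForm s)
  | .tt => {.tt}
  | .uatom p ts => {.uatom p ts}
  | .iatom r ts => {.iatom r ts}
  | .neg φ => insert (.neg φ) (sfA φ)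
  | .and φ ψ => insert (.and φ ψ) (sfA φ ∪ sfA ψ)
  | .next φ => insert (.next φ) (sfA φ)
  | .until_ φ ψ => insert (.until_ φ ψ) (sfA φ ∪ sfA ψ)
  | .forall_ p xs φ => {.forall_ p xs φ}

/-- The closure `cl(φ)`: the smallest set containing `sf|∀(φ)` closed under negation. -/
def cl (φ : FOForm s) : Set (FOForm s) := sfA φ ∪ (FOForm.neg '' sfA φ)

/-- A complete subset of `cl(φ)` (a state of the spawning automaton `A_φ`). -/
def Complete (φ : FOForm s) (q : Set (FOForm s)) : Prop :=
  q ⊆ cl φ ∧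
  (∀ ψ ∈ sfA φ, (ψ ∈ q ∨ FOForm.neg ψ ∈ q) ∧ ¬ (ψ ∈ q ∧ FOForm.neg ψ ∈ q)) ∧
  (∀ ψ ψ', FOForm.and ψ ψ' ∈ cl φ → (FOForm.and ψ ψ' ∈ q ↔ (ψ ∈ q ∧ ψ' ∈ q))) ∧
  (∀ ψ ψ', FOForm.until_ ψ ψ' ∈ cl φ →
    ((FOForm.until_ ψ ψ' ∈ q → (ψ' ∈ q ∨ ψ ∈ q)) ∧
      (FOForm.until_ ψ ψ' ∉ q → ψ' ∉ q)))

/-- Definedness condition of `δ→` at a state `q` on the `i`-th input `(𝔄ᵢ, wᵢ)`: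
all (possibly negated) atomic formulae of `q` are (respectively not) true there. -/
def AtomsOK (M : TStruct s D) (v : ℕ → D) (i : ℕ) (q : Set (FOForm s)) : Prop :=
  (FOForm.neg FOForm.tt ∉ q) ∧
  (∀ p ts, FOForm.uatom p ts ∈ q →
    (⟨p, fun k => Tm.eval M.funcI v (ts k)⟩ : Action s D) ∈ M.trace i) ∧
  (∀ p ts, FOForm.neg (FOForm.uatom p ts) ∈ q →
    (⟨p, fun k => Tm.eval M.funcI v (ts k)⟩ : Action s D) ∉ M.trace i) ∧
  (∀ r ts, FOForm.iatom r ts ∈ q → M.predI i r (fun k => Tm.eval M.funcI v (ts k))) ∧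
  (∀ r ts, FOForm.neg (FOForm.iatom r ts) ∈ q →
    ¬ M.predI i r (fun k => Tm.eval M.funcI v (ts k)))

/-- The transition relation `q' ∈ δ→(q, (𝔄ᵢ, wᵢ))` of `A_{φ,v}`. -/
def Step (φ : FOForm s) (M : TStruct s D) (v : ℕ → D) (i : ℕ)
    (q q' : Set (FOForm s)) : Prop :=
  AtomsOK M v i q ∧
  (∀ ψ, FOForm.next ψ ∈ cl φ → (FOForm.next ψ ∈ q ↔ ψ ∈ q')) ∧
  (∀ ψ ψ', FOForm.until_ ψ ψ' ∈ cl φ →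
    (FOForm.until_ ψ ψ' ∈ q ↔ (ψ' ∈ q ∨ (ψ ∈ q ∧ FOForm.until_ ψ ψ' ∈ q'))))

/-- A run of `A_{φ,v}` over `(𝔄̄, w)`: a sequence of complete states starting in an
initial state (one containing `φ`) and respecting `δ→`. -/
def IsRun (φ : FOForm s) (M : TStruct s D) (v : ℕ → D) (ρ : ℕ → Set (FOForm s)) : Prop :=
  (∀ i, Complete φ (ρ i)) ∧ φ ∈ ρ 0 ∧ ∀ i, Step φ M v i (ρ i) (ρ (i + 1))

/-- Local (generalized Büchi) acceptance: for each `ψUψ' ∈ cl(φ)`, the set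
`F_{ψUψ'} = {q | ψ' ∈ q ∨ ¬(ψUψ') ∈ q}` is visited infinitely often. -/
def LocallyAccepting (φ : FOForm s) (ρ : ℕ → Set (FOForm s)) : Prop :=
  ∀ ψ ψ', FOForm.until_ ψ ψ' ∈ cl φ →
    ∀ N, ∃ i, N ≤ i ∧ (ψ' ∈ ρ i ∨ FOForm.neg (FOForm.until_ ψ ψ') ∈ ρ i)

/-- The suffix `(𝔄̄ⁱ, wⁱ)` of a first-order temporal structure. -/
def TStruct.shift (M : TStruct s D) (i : ℕ) : TStruct s D where
  funcI := M.funcI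
  predI := fun j => M.predI (i + j)
  trace := fun j => M.trace (i + j)
  finEv := fun j => M.finEv (i + j)

/-- Acceptance for spawning automata `A_{φ,v}` of level at most `n`, by recursion on
the level: a run is accepting if it is a locally accepting run and, at every position
`i`, the spawning obligation `δ↓(ρ(i), (𝔄ᵢ, wᵢ))` is satisfiable by a set of spawned
automata all of which have an accepting run over the suffix `(𝔄̄ⁱ, wⁱ)`:
for every `∀x⃗:p.ψ ∈ ρ(i)` and every action `(p, d⃗) ∈ wᵢ` the automaton
`A_{ψ, v∪{x⃗↦d⃗}}` must accept, and for every `¬∀x⃗:p.ψ ∈ ρ(i)` some action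
`(p, d⃗) ∈ wᵢ` must give an accepting `A_{¬ψ, v∪{x⃗↦d⃗}}`.  (At level `0` the
spawning function is constantly `⊤`.) -/
def AcceptingAux : ℕ → TStruct s D → FOForm s → (ℕ → D) → (ℕ → Set (FOForm s)) → Prop
  | 0, M, φ, v, ρ => IsRun φ M v ρ ∧ LocallyAccepting φ ρ
  | n + 1, M, φ, v, ρ =>
      IsRun φ M v ρ ∧ LocallyAccepting φ ρ ∧
      ∀ i : ℕ,
        (∀ p xs ψ, FOForm.forall_ p xs ψ ∈ ρ i →
          ∀ d : Fin (s.arU p) → D, (⟨p, d⟩ : Action s D) ∈ M.trace i →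
            ∃ ρ', AcceptingAux n (M.shift i) ψ (updVec v xs d) ρ') ∧
        (∀ p xs ψ, FOForm.neg (FOForm.forall_ p xs ψ) ∈ ρ i →
          ∃ d : Fin (s.arU p) → D, (⟨p, d⟩ : Action s D) ∈ M.trace i ∧
            ∃ ρ', AcceptingAux n (M.shift i) (FOForm.neg ψ) (updVec v xs d) ρ')

/-- `ρ` is an accepting run of the spawning automaton `A_{φ,v}` (whose level is the
quantifier depth of `φ`) over the first-order temporal structure `M = (𝔄̄, w)`. -/
def Accepting (M : TStruct s D) (φ : FOForm s) (v : ℕ → D)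
    (ρ : ℕ → Set (FOForm s)) : Prop :=
  AcceptingAux (depthFO φ) M φ v ρ

end LTLFO

/-!
By induction on the level, and for a fixed level by induction on `ψ ∈ sf|∀(φ)`. Atoms are
checked by the definedness condition of `δ→`, negation and conjunction by completeness of the
states, `X` by `δ→`. A quantified subformula is decided by the spawned automata, which have
smaller level and read the suffix `wⁱ`, so they are correct by the outer induction. For
`ψ U ψ'`, `δ→` only says that `j ↦ (ψ U ψ' ∈ ρ(j))` solves the expansion law
`u ↔ ψ' ∨ (ψ ∧ X u)`, whose least solution is the semantics of `ψ U ψ'`; the Büchi set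
`F_{ψUψ'}` rules out every other solution, in which `ψ'` is postponed forever.
-/

namespace LTLFO

variable {s : Sig} {D : Type}

theorem mem_sfA_self (φ : FOForm s) : φ ∈ sfA φ := by
  cases φ <;> simp [sfA]

theorem sfA_subset_of_mem {φ ψ : FOForm s} (h : ψ ∈ sfA φ) : sfA ψ ⊆ sfA φ := by
  induction φ with
  | neg χ ih | next χ ih =>
    obtain rfl | h := h
    · rfl
    · exact (ih h).trans (Set.subset_insert _ _)
  | and χ χ' ih ih' | until_ χ χ' ih ih' =>
    obtain rfl | h | h := h
    · rfl
    · exact (ih h).trans (Set.subset_union_left.trans (Set.subset_insert _ _))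
    · exact (ih' h).trans (Set.subset_union_right.trans (Set.subset_insert _ _))
  | _ => obtain rfl := h; rfl

theorem depthFO_le_of_mem_sfA {φ ψ : FOForm s} (h : ψ ∈ sfA φ) :
    depthFO ψ ≤ depthFO φ := by
  induction φ with
  | neg χ ih | next χ ih =>
    obtain rfl | h := h
    · rfl
    · exact ih h
  | and χ χ' ih ih' | until_ χ χ' ih ih' =>
    obtain rfl | h | h := h
    · rfl
    · exact (ih h).trans (le_max_left _ _)
    · exact (ih' h).trans (le_max_right _ _)
  | _ => obtain rfl := h; rfl

theorem Complete.neg_mem_iff {φ : FOForm s} {q : Set (FOForm s)} (hq : Complete φ q)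
    {ψ : FOForm s} (hψ : ψ ∈ sfA φ) : FOForm.neg ψ ∈ q ↔ ψ ∉ q := by
  obtain ⟨hor, hnand⟩ := hq.2.1 ψ hψ
  exact ⟨fun hn hm => hnand ⟨hm, hn⟩, hor.resolve_left⟩

theorem Complete.mem_iff_of_imp {φ : FOForm s} {q : Set (FOForm s)} (hq : Complete φ q)
    {ψ : FOForm s} (hψ : ψ ∈ sfA φ) {P : Prop} (hpos : ψ ∈ q → P)
    (hneg : FOForm.neg ψ ∈ q → ¬ P) : ψ ∈ q ↔ P :=
  ⟨hpos, fun hP => not_not.mp fun hm => hneg ((hq.neg_mem_iff hψ).mpr hm) hP⟩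

theorem sat_shift (M : TStruct s D) (ψ : FOForm s) (v : ℕ → D) (i j : ℕ) :
    Sat (M.shift i) ψ v j ↔ Sat M ψ v (i + j) := by
  induction ψ generalizing v j with
  | tt | uatom | iatom => simp [Sat, TStruct.shift]
  | neg χ ih => simp [Sat, ih]
  | and χ χ' ih ih' => simp [Sat, ih, ih']
  | next χ ih => simp only [Sat, ih, Nat.add_assoc]
  | until_ χ χ' ih ih' =>
    simp only [Sat, ih, ih']
    constructor
    · rintro ⟨k, hjk, hk, hbefore⟩
      refine ⟨i + k, by omega, hk, fun m hm hmk => ?_⟩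
      simpa [Nat.add_sub_cancel' (by omega : i ≤ m)] using hbefore (m - i) (by omega) (by omega)
    · rintro ⟨k, hjk, hk, hbefore⟩
      refine ⟨k - i, by omega, by rwa [Nat.add_sub_cancel' (by omega : i ≤ k)],
        fun m hm hmk => hbefore (i + m) (by omega) (by omega)⟩
  | forall_ p xs χ ih => simp only [Sat, ih]; rfl

theorem until_iff_of_unfold {a b u : ℕ → Prop}
    (unfold : ∀ j, u j ↔ b j ∨ (a j ∧ u (j + 1)))
    (fair : ∀ N, ∃ j, N ≤ j ∧ (b j ∨ ¬ u j)) (i : ℕ) :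
    u i ↔ ∃ k, i ≤ k ∧ b k ∧ ∀ j, i ≤ j → j < k → a j := by
  constructor
  · intro hu
    by_contra! hnever
    have hpostponed : ∀ m, u (i + m) ∧ ∀ j, i ≤ j → j < i + m → a j := by
      intro m
      induction m with
      | zero => exact ⟨hu, fun j hij hj => absurd hj (by omega)⟩
      | succ m ih =>
        obtain ⟨hum, hbefore⟩ := ih
        rcases (unfold (i + m)).mp hum with hb | ⟨ha, hnext⟩
        · obtain ⟨j, hij, hjm, hna⟩ := hnever (i + m) (by omega) hb
          exact absurd (hbefore j hij hjm) hna
        · refine ⟨hnext, fun j hij hj => ?_⟩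
          obtain hj | rfl := Nat.lt_succ_iff_lt_or_eq.mp hj
          exacts [hbefore j hij hj, ha]
    obtain ⟨j, hij, hbj | hnu⟩ := fair i
    all_goals obtain ⟨huj, hbefore⟩ := hpostponed (j - i)
    all_goals rw [Nat.add_sub_cancel' hij] at huj hbefore
    · obtain ⟨j', hij', hj'j, hna⟩ := hnever j hij hbj
      exact hna (hbefore j' hij' hj'j)
    · exact hnu huj
  · rintro ⟨k, hik, hbk, hbefore⟩
    have hback : ∀ d j, i ≤ j → j + d = k → u j := by
      intro d
      induction d with
      | zero => rintro j - rfl; exact (unfold j).mpr (Or.inl hbk)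
      | succ d ih =>
        rintro j hij rfl
        exact (unfold j).mpr
          (Or.inr ⟨hbefore j hij (by omega), ih (j + 1) (by omega) (by omega)⟩)
    exact hback (k - i) i le_rfl (by omega)

section Runs

variable {φ : FOForm s} {M : TStruct s D} {v : ℕ → D} {ρ : ℕ → Set (FOForm s)}

theorem AcceptingAux.isRun {n : ℕ} (h : AcceptingAux n M φ v ρ) : IsRun φ M v ρ := by
  cases n <;> exact h.1

theorem AcceptingAux.locallyAccepting {n : ℕ} (h : AcceptingAux n M φ v ρ) :
    LocallyAccepting φ ρ := by
  cases n with
  | zero => exact h.2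
  | succ => exact h.2.1

theorem IsRun.mem_iff_sat (hrun : IsRun φ M v ρ) (hloc : LocallyAccepting φ ρ)
    (hquant : ∀ p xs χ, FOForm.forall_ p xs χ ∈ sfA φ →
      ∀ i, FOForm.forall_ p xs χ ∈ ρ i ↔ Sat M (FOForm.forall_ p xs χ) v i)
    {ψ : FOForm s} (hψ : ψ ∈ sfA φ) (i : ℕ) : ψ ∈ ρ i ↔ Sat M ψ v i := by
  obtain ⟨hcomp, -, hstep⟩ := hrun
  induction ψ generalizing i with
  | tt => exact (hcomp i).mem_iff_of_imp hψ (fun _ => trivial) fun h _ => (hstep i).1.1 h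
  | uatom p ts =>
    obtain ⟨-, hpos, hneg, -, -⟩ := (hstep i).1
    exact (hcomp i).mem_iff_of_imp hψ (hpos p ts) (hneg p ts)
  | iatom r ts =>
    obtain ⟨-, -, -, hpos, hneg⟩ := (hstep i).1
    exact (hcomp i).mem_iff_of_imp hψ (hpos r ts) (hneg r ts)
  | neg χ ih =>
    have hχ := sfA_subset_of_mem hψ (Or.inr (mem_sfA_self χ))
    rw [(hcomp i).neg_mem_iff hχ, ih hχ i]
    rfl
  | and χ χ' ih ih' =>
    have hχ := sfA_subset_of_mem hψ (Or.inr (Or.inl (mem_sfA_self χ)))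
    have hχ' := sfA_subset_of_mem hψ (Or.inr (Or.inr (mem_sfA_self χ')))
    rw [(hcomp i).2.2.1 χ χ' (Or.inl hψ), ih hχ i, ih' hχ' i]
    rfl
  | next χ ih =>
    have hχ := sfA_subset_of_mem hψ (Or.inr (mem_sfA_self χ))
    rw [(hstep i).2.1 χ (Or.inl hψ), ih hχ (i + 1)]
    rfl
  | until_ χ χ' ih ih' =>
    have hχ := sfA_subset_of_mem hψ (Or.inr (Or.inl (mem_sfA_self χ)))
    have hχ' := sfA_subset_of_mem hψ (Or.inr (Or.inr (mem_sfA_self χ')))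
    refine until_iff_of_unfold (u := fun j => FOForm.until_ χ χ' ∈ ρ j) (fun j => ?_)
      (fun N => ?_) i
    · rw [(hstep j).2.2 χ χ' (Or.inl hψ), ih hχ j, ih' hχ' j]
    · obtain ⟨j, hNj, hj⟩ := hloc χ χ' (Or.inl hψ) N
      rw [(hcomp j).neg_mem_iff hψ] at hj
      exact ⟨j, hNj, hj.imp_left (ih' hχ' j).mp⟩
  | forall_ p xs χ => exact hquant p xs χ hψ i

end Runs

theorem AcceptingAux.mem_iff_sat {n : ℕ} {φ : FOForm s} {M : TStruct s D} {v : ℕ → D}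
    {ρ : ℕ → Set (FOForm s)} (hacc : AcceptingAux n M φ v ρ) (hdepth : depthFO φ ≤ n)
    {ψ : FOForm s} (hψ : ψ ∈ sfA φ) (i : ℕ) : ψ ∈ ρ i ↔ Sat M ψ v i := by
  refine hacc.isRun.mem_iff_sat hacc.locallyAccepting (fun p xs χ hχ j => ?_) hψ i
  have hdepthχ : depthFO χ + 1 ≤ n := (depthFO_le_of_mem_sfA hχ).trans hdepth
  cases n with
  | zero => omega
  | succ n =>
    have spawned_sat : ∀ {χ' v' ρ'}, depthFO χ' ≤ n →
        AcceptingAux n (M.shift j) χ' v' ρ' → Sat M χ' v' j := fun hd hacc' => by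
      simpa using (sat_shift M _ _ j 0).mp
        ((hacc'.mem_iff_sat hd (mem_sfA_self _) 0).mp hacc'.isRun.2.1)
    refine (hacc.isRun.1 j).mem_iff_of_imp hχ (fun hmem d hd => ?_) fun hmem hsat => ?_
    · obtain ⟨ρ', hacc'⟩ := (hacc.2.2 j).1 p xs χ hmem d hd
      exact spawned_sat (by omega) hacc'
    · obtain ⟨d, hd, ρ', hacc'⟩ := (hacc.2.2 j).2 p xs χ hmem
      exact spawned_sat (by simp only [depthFO]; omega) hacc' (hsat d hd)
termination_by n

/-- Correctness of runs of spawning automata: for every LTL^FO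
formula `φ` (not necessarily a sentence), every valuation `v`, and every accepting run
`ρ` of `A_{φ,v}` over an input first-order temporal structure `(𝔄̄, w)`, for each
`ψ ∈ cl(φ)` and each `i ≥ 0`: `ψ ∈ ρ(i)` iff `(𝔄̄, w, v, i) ⊨ ψ`. -/
theorem run_correctness {s : Sig} {D : Type}
    (φ : FOForm s) (v : ℕ → D) (M : TStruct s D)
    (ρ : ℕ → Set (FOForm s)) (hacc : Accepting M φ v ρ) :
    ∀ ψ ∈ cl φ, ∀ i : ℕ, ψ ∈ ρ i ↔ Sat M ψ v i := by
  rintro ψ (hψ | ⟨χ, hχ, rfl⟩) i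
  · exact hacc.mem_iff_sat le_rfl hψ i
  · rw [(hacc.isRun.1 i).neg_mem_iff hχ, hacc.mem_iff_sat le_rfl hχ i]
    rfl

end LTLFO
end
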